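/- Let G be a connected bridgeless graph with at least one edge, and let G' be the graph obtained from G by subdividing one edge (replacing an edge uv by a path u w v through a new vertex w). Then G' is connected and bridgeless, and the oriented strong diameter of G' is at least the oriented strong diameter of G. -/

import Mathlib

open SimpleGraph

variable {V : Type*}

/-- A graph is bridgeless if no edge is a bridge. -/
def IsBridgeless (G : SimpleGraph V) : Prop := ∀ e : Sym2 V, ¬ G.IsBridge e

/-- `R` is an orientation of `G`: every arc of `R` is an edge of `G`, every edge of `G`
receives exactly one direction. -/
def IsOrientation (G : SimpleGraph V) (R : V → V → Prop) : Prop :=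
  (∀ u v, R u v → G.Adj u v) ∧ (∀ u v, G.Adj u v → (R u v ∨ R v u)) ∧
  (∀ u v, R u v → ¬ R v u)

/-- There is a directed walk of length `n` from `u` to `v` along the relation `R`. -/
def HasDirWalk (R : V → V → Prop) (u v : V) (n : ℕ) : Prop :=
  ∃ f : Fin (n + 1) → V, f 0 = u ∧ f (Fin.last n) = v ∧
    ∀ i : Fin n, R (f i.castSucc) (f i.succ)

/-- `R` is strongly connected. -/
def IsStrong (R : V → V → Prop) : Prop := ∀ u v : V, ∃ n, HasDirWalk R u v n

/-- `R` is strongly connected within the vertex set `W`. -/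
def IsStrongOn (R : V → V → Prop) (W : Set V) : Prop :=
  ∀ u ∈ W, ∀ v ∈ W, ∃ n, HasDirWalk R u v n

/-- Directed distance `∂(u,v)`: length of a shortest directed path from `u` to `v`. -/
noncomputable def ddist (R : V → V → Prop) (u v : V) : ℕ := sInf {n | HasDirWalk R u v n}

/-- `θ(u,v) = max{∂(u,v), ∂(v,u)}`. -/
noncomputable def theta (R : V → V → Prop) (u v : V) : ℕ := max (ddist R u v) (ddist R v u)

/-- The diameter of a (strong) orientation. -/
noncomputable def diamOr [Fintype V] (R : V → V → Prop) : ℕ :=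
  Finset.univ.sup fun p : V × V => theta R p.1 p.2

/-- The oriented diameter of `G`. -/
noncomputable def orientedDiam [Fintype V] (G : SimpleGraph V) : ℕ :=
  sInf {d | ∃ R : V → V → Prop, IsOrientation G R ∧ IsStrong R ∧ diamOr R = d}

/-- `A` is the arc set of a strongly connected subdigraph of `R` containing `u` and `v`. -/
def IsStrongSubOn (R : V → V → Prop) (u v : V) (A : Set (V × V)) : Prop :=
  (∀ p ∈ A, R p.1 p.2) ∧
  (∀ x ∈ insert u (insert v (Prod.fst '' A ∪ Prod.snd '' A)),
   ∀ y ∈ insert u (insert v (Prod.fst '' A ∪ Prod.snd '' A)),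
     Relation.ReflTransGen (fun a b => (a, b) ∈ A) x y)

/-- Strong distance `sd(u,v)`: minimum number of arcs of a strong subdigraph containing
`u` and `v`. -/
noncomputable def sdist (R : V → V → Prop) (u v : V) : ℕ :=
  sInf {n | ∃ A : Set (V × V), A.Finite ∧ A.ncard = n ∧ IsStrongSubOn R u v A}

/-- The strong diameter of a (strong) orientation. -/
noncomputable def sdiamOr [Fintype V] (R : V → V → Prop) : ℕ :=
  Finset.univ.sup fun p : V × V => sdist R p.1 p.2

/-- The oriented strong diameter of `G`. -/
noncomputable def orientedSDiam [Fintype V] (G : SimpleGraph V) : ℕ :=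
  sInf {d | ∃ R : V → V → Prop, IsOrientation G R ∧ IsStrong R ∧ sdiamOr R = d}

/-- `D` is a dominating set of `G`. -/
def IsDominating (G : SimpleGraph V) (D : Set V) : Prop :=
  ∀ v ∉ D, ∃ u ∈ D, G.Adj u v

/-- The domination number of `G`. -/
noncomputable def dominationNumber [Fintype V] (G : SimpleGraph V) : ℕ :=
  sInf {n | ∃ D : Set V, D.ncard = n ∧ IsDominating G D}

/-- `v` is associated with an isolated triangle. -/
def HasIsolatedTriangle (G : SimpleGraph V) (v : V) : Prop :=
  ∃ v₁ v₂ : V, G.Adj v v₁ ∧ G.Adj v₁ v₂ ∧ G.Adj v₂ v ∧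
    (G.neighborSet v₁).ncard = 2 ∧ (G.neighborSet v₂).ncard = 2

/-- `(G, D)` is a standard pair. -/
def IsStandardPair (G : SimpleGraph V) (D : Set V) : Prop :=
  IsBridgeless G ∧
  (∀ u ∈ D, ∀ v ∈ D, ¬ G.Adj u v) ∧
  (∀ v ∉ D, ∃! u, u ∈ D ∧ G.Adj u v) ∧
  (∀ v ∈ D, HasIsolatedTriangle G v)

/-- `H` is an alternative subgraph of `G` with respect to the dominating set `D`. -/
def IsAlternative (G : SimpleGraph V) (D : Set V) (H : G.Subgraph) : Prop :=
  IsBridgeless H.coe ∧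
  (H.verts ∩ D).Nonempty ∧
  (∀ x ∈ H.verts ∩ D, ∃ a b : V, a ≠ b ∧ a ∉ D ∧ b ∉ D ∧ H.Adj x a ∧ H.Adj x b ∧
    ∀ c, c ∉ D → H.Adj x c → c = a ∨ c = b) ∧
  (∀ y ∈ H.verts, y ∉ D → ∃ x ∈ H.verts ∩ D, H.Adj x y)

/-- `d_i(H⃗)`: maximum of `θ(u,v)` over pairs `u, v ∈ W` with `|{u,v} ∩ D| = i`. -/
noncomputable def dPairs (R : V → V → Prop) (W D : Set V) (i : ℕ) : ℕ :=
  sSup {k | ∃ u ∈ W, ∃ v ∈ W, ({u, v} ∩ D).ncard = i ∧ theta R u v = k}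

/-- `m(H⃗) = max{d₀ − 2, d₁ − 1, d₂}`. -/
noncomputable def mOf (R : V → V → Prop) (W D : Set V) : ℕ :=
  max (dPairs R W D 0 - 2) (max (dPairs R W D 1 - 1) (dPairs R W D 2))

/-- The graph obtained from `G` by subdividing the edge `uv` with a new vertex `none`. -/
def subdivide (G : SimpleGraph V) (u v : V) : SimpleGraph (Option V) :=
  SimpleGraph.fromRel fun a b =>
    match a, b with
    | some x, some y => G.Adj x y ∧ ¬(x = u ∧ y = v) ∧ ¬(x = v ∧ y = u)
    | some x, none => x = u ∨ x = v
    | none, _ => False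

/-- The graph obtained from `G` by attaching a pendant triangle at `v`. -/
def pendantTriangle (G : SimpleGraph V) (v : V) : SimpleGraph (V ⊕ Fin 2) :=
  SimpleGraph.fromRel fun a b =>
    match a, b with
    | Sum.inl x, Sum.inl y => G.Adj x y
    | Sum.inl x, Sum.inr _ => x = v
    | Sum.inr _, Sum.inl _ => False
    | Sum.inr i, Sum.inr j => i ≠ j

/-- `G` has a Hamiltonian path with endpoints `u` and `v`. -/
def HasHamiltonianPathBetween (G : SimpleGraph V) (u v : V) : Prop :=
  ∃ p : G.Walk u v, p.IsPath ∧ ∀ w : V, w ∈ p.support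


/-!
Bridgelessness transfers because a walk of `G` avoiding an edge lifts to a walk of the
subdivision (the edge `uv` becoming the path `u w v`) avoiding the corresponding edge.

For the diameter, take an optimal strong orientation of the subdivision. The new vertex `w = none`
has exactly one in-arc and one out-arc, say `u → w → v`; contracting this path to the arc
`u → v` gives a strong orientation of `G`, and contracting a strong subdigraph through `x`, `y`
gives one of `G` through `x`, `y` with no more arcs. Conversely a strong orientation of `G`
subdivides to one of the subdivision; this is needed because `sInf ∅ = 0`, so both oriented
strong diameters must be taken over nonempty sets or both over empty ones.
-/

open Relation

section DirectedWalks

variable {α : Type*} {R : α → α → Prop} {a b : α}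

theorem hasDirWalk_zero_iff : HasDirWalk R a b 0 ↔ a = b := by
  constructor
  · rintro ⟨f, rfl, rfl, -⟩
    rfl
  · rintro rfl
    exact ⟨fun _ => a, rfl, rfl, fun i => i.elim0⟩

theorem hasDirWalk_succ_iff {n : ℕ} :
    HasDirWalk R a b (n + 1) ↔ ∃ c, R a c ∧ HasDirWalk R c b n := by
  constructor
  · rintro ⟨f, rfl, rfl, hf⟩
    refine ⟨f 1, by simpa using hf 0, fun i => f i.succ, rfl, congrArg f (Fin.succ_last n),
      fun i => ?_⟩
    simpa only [Fin.succ_castSucc] using hf i.succ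
  · rintro ⟨c, hac, f, rfl, rfl, hf⟩
    refine ⟨Fin.cons a f, rfl, by rw [← Fin.succ_last, Fin.cons_succ], fun i => ?_⟩
    induction i using Fin.cases with
    | zero => simpa using hac
    | succ i => simpa [← Fin.succ_castSucc] using hf i

theorem exists_hasDirWalk_iff_reflTransGen :
    (∃ n, HasDirWalk R a b n) ↔ ReflTransGen R a b := by
  constructor
  · rintro ⟨n, h⟩
    induction n generalizing a with
    | zero => rw [hasDirWalk_zero_iff.mp h]
    | succ n ih =>
      obtain ⟨c, hac, hcb⟩ := hasDirWalk_succ_iff.mp h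
      exact .head hac (ih hcb)
  · intro h
    induction h using ReflTransGen.head_induction_on with
    | refl => exact ⟨0, hasDirWalk_zero_iff.mpr rfl⟩
    | head hac _ ih =>
      obtain ⟨n, hcb⟩ := ih
      exact ⟨n + 1, hasDirWalk_succ_iff.mpr ⟨_, hac, hcb⟩⟩

theorem isStrong_iff_forall_reflTransGen : IsStrong R ↔ ∀ a b, ReflTransGen R a b := by
  simp only [IsStrong, exists_hasDirWalk_iff_reflTransGen]

end DirectedWalks

section StrongSubdigraphs

variable {α : Type*}

abbrev arcRel (A : Set (α × α)) (a b : α) : Prop := (a, b) ∈ A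

variable {R : α → α → Prop} {x y : α} {A : Set (α × α)}

/-- Every vertex of the subdigraph is strongly connected to `x` as soon as, for each arc,
its tail is reachable from `x` and its head reaches `x`. -/
theorem isStrongSubOn_iff : IsStrongSubOn R x y A ↔ (∀ p ∈ A, R p.1 p.2) ∧
    ReflTransGen (arcRel A) x y ∧ ReflTransGen (arcRel A) y x ∧
    ∀ p ∈ A, ReflTransGen (arcRel A) x p.1 ∧ ReflTransGen (arcRel A) p.2 x := by
  refine and_congr_right fun _ => ⟨fun h => ?_, fun ⟨hxy, hyx, hA⟩ => ?_⟩
  · have mem {s} (hs : s ∈ Prod.fst '' A ∪ Prod.snd '' A) :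
        s ∈ insert x (insert y (Prod.fst '' A ∪ Prod.snd '' A)) :=
      Set.mem_insert_of_mem _ (Set.mem_insert_of_mem _ hs)
    exact ⟨h x (by simp) y (by simp), h y (by simp) x (by simp), fun p hp =>
      ⟨h x (by simp) p.1 (mem (.inl ⟨p, hp, rfl⟩)),
        h p.2 (mem (.inr ⟨p, hp, rfl⟩)) x (by simp)⟩⟩
  · have hx : ∀ s ∈ insert x (insert y (Prod.fst '' A ∪ Prod.snd '' A)),
        ReflTransGen (arcRel A) x s ∧ ReflTransGen (arcRel A) s x := by
      rintro s (rfl | rfl | ⟨p, hp, rfl⟩ | ⟨p, hp, rfl⟩)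
      · exact ⟨.refl, .refl⟩
      · exact ⟨hxy, hyx⟩
      · exact ⟨(hA p hp).1, .head hp (hA p hp).2⟩
      · exact ⟨(hA p hp).1.tail hp, (hA p hp).2⟩
    exact fun s hs t ht => (hx s hs).2.trans (hx t ht).1

theorem sdist_le_ncard (hA : A.Finite) (h : IsStrongSubOn R x y A) : sdist R x y ≤ A.ncard :=
  Nat.sInf_le ⟨A, hA, rfl, h⟩

theorem exists_isStrongSubOn_ncard_eq_sdist [Finite α] (hR : IsStrong R) (x y : α) :
    ∃ A : Set (α × α), A.ncard = sdist R x y ∧ IsStrongSubOn R x y A := by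
  have hne :
      {n | ∃ A : Set (α × α), A.Finite ∧ A.ncard = n ∧ IsStrongSubOn R x y A}.Nonempty :=
    ⟨_, {p | R p.1 p.2}, Set.toFinite _, rfl, fun _ hp => hp,
      fun a _ b _ => isStrong_iff_forall_reflTransGen.mp hR a b⟩
  obtain ⟨A, -, hcard, hA⟩ := Nat.sInf_mem hne
  exact ⟨A, hcard, hA⟩

end StrongSubdigraphs

theorem Nat.sInf_le_sInf_of_forall_exists_le {s t : Set ℕ} (h : ∀ b ∈ t, ∃ a ∈ s, a ≤ b)
    (hne : s.Nonempty → t.Nonempty) : sInf s ≤ sInf t := by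
  rcases t.eq_empty_or_nonempty with rfl | ht
  · rw [Set.not_nonempty_iff_eq_empty.mp fun hs => (hne hs).ne_empty rfl]
  · obtain ⟨a, ha, hab⟩ := h _ (Nat.sInf_mem ht)
    exact (Nat.sInf_le ha).trans hab

theorem SimpleGraph.Reachable.lift {W : Type*} {G : SimpleGraph V} {H : SimpleGraph W}
    (f : V → W) (hf : ∀ a b, G.Adj a b → H.Reachable (f a) (f b)) {a b : V}
    (h : G.Reachable a b) : H.Reachable (f a) (f b) := by
  rw [reachable_iff_reflTransGen] at h ⊢
  exact h.lift' f fun c d hcd => (reachable_iff_reflTransGen _ _).mp (hf c d hcd)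

theorem isBridgeless_iff {G : SimpleGraph V} :
    IsBridgeless G ↔ ∀ a b, (G.deleteEdges {s(a, b)}).Reachable a b := by
  simp [IsBridgeless, Sym2.forall, isBridge_iff]

theorem IsBridgeless.preconnected {G : SimpleGraph V} (h : IsBridgeless G) : G.Preconnected :=
  fun a b => (isBridgeless_iff.mp h a b).mono (deleteEdges_le _)

section Subdivision

variable {G : SimpleGraph V} {u v : V}

@[simp]
theorem subdivide_adj_some_some {x y : V} :
    (subdivide G u v).Adj (some x) (some y) ↔ G.Adj x y ∧ s(x, y) ≠ s(u, v) := by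
  simp only [subdivide, fromRel_adj, ne_eq, Option.some.injEq, Sym2.eq_iff]
  constructor
  · rintro ⟨-, h | h⟩
    · tauto
    · exact ⟨h.1.symm, by tauto⟩
  · rintro ⟨h, hne⟩
    exact ⟨h.ne, .inl ⟨h, by tauto⟩⟩

@[simp]
theorem subdivide_adj_none_left {b : Option V} :
    (subdivide G u v).Adj none b ↔ b = some u ∨ b = some v := by
  cases b <;> simp [subdivide]

@[simp]
theorem subdivide_adj_none_right {a : Option V} :
    (subdivide G u v).Adj a none ↔ a = some u ∨ a = some v := by
  rw [adj_comm, subdivide_adj_none_left]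

theorem subdivide_comm : subdivide G u v = subdivide G v u := by
  ext (_ | x) (_ | y) <;> simp [Sym2.eq_swap (a := u), or_comm]

theorem reachable_some_of_reachable {G₀ : SimpleGraph V} {H : SimpleGraph (Option V)}
    (hadj : ∀ c d, G₀.Adj c d → s(c, d) ≠ s(u, v) → H.Adj (some c) (some d))
    (huv : G₀.Adj u v → H.Reachable (some u) (some v)) {a b : V} (hab : G₀.Reachable a b) :
    H.Reachable (some a) (some b) :=
  hab.lift some fun c d hcd => by
    by_cases h : s(c, d) = s(u, v)
    · rcases Sym2.eq_iff.mp h with ⟨rfl, rfl⟩ | ⟨rfl, rfl⟩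
      · exact huv hcd
      · exact (huv hcd.symm).symm
    · exact (hadj c d hcd h).reachable

theorem subdivide_deleteEdges_reachable_some_some (hG : IsBridgeless G) (x y : V) :
    ((subdivide G u v).deleteEdges {s(some x, some y)}).Reachable (some x) (some y) := by
  refine reachable_some_of_reachable (u := u) (v := v) (fun c d hcd hne => ?_) (fun _ => ?_)
    (isBridgeless_iff.mp hG x y)
  · rw [deleteEdges_adj] at hcd ⊢
    exact ⟨subdivide_adj_some_some.mpr ⟨hcd.1, hne⟩, by simpa using hcd.2⟩
  · have hu : ((subdivide G u v).deleteEdges {s(some x, some y)}).Adj (some u) none := by simp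
    have hv : ((subdivide G u v).deleteEdges {s(some x, some y)}).Adj none (some v) := by simp
    exact hu.reachable.trans hv.reachable

theorem subdivide_deleteEdges_reachable_some_none (hG : IsBridgeless G) {x : V} (hxv : x ≠ v) :
    ((subdivide G u v).deleteEdges {s(some x, none)}).Reachable (some x) none := by
  have hvw : ((subdivide G u v).deleteEdges {s(some x, none)}).Adj (some v) none := by
    simp [hxv.symm]
  refine (reachable_some_of_reachable (u := u) (v := v) (fun c d hcd hne => ?_) (fun huv => ?_)
    (isBridgeless_iff.mp hG x v)).trans hvw.reachable
  · rw [deleteEdges_adj] at hcd ⊢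
    exact ⟨subdivide_adj_some_some.mpr ⟨hcd.1, hne⟩, by simp⟩
  · have hxu : x ≠ u := by
      rintro rfl
      simp at huv
    have hu : ((subdivide G u v).deleteEdges {s(some x, none)}).Adj (some u) none := by
      simp [hxu.symm]
    have hv : ((subdivide G u v).deleteEdges {s(some x, none)}).Adj none (some v) := by
      simp [hxv.symm]
    exact hu.reachable.trans hv.reachable

theorem isBridgeless_subdivide (hG : IsBridgeless G) (huv : G.Adj u v) :
    IsBridgeless (subdivide G u v) := by
  have some_none (x : V) :
      ((subdivide G u v).deleteEdges {s(some x, none)}).Reachable (some x) none := by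
    by_cases hxv : x = v
    · subst hxv
      rw [subdivide_comm]
      exact subdivide_deleteEdges_reachable_some_none hG huv.ne'
    · exact subdivide_deleteEdges_reachable_some_none hG hxv
  rw [isBridgeless_iff]
  rintro (_ | x) (_ | y)
  · exact .rfl
  · rw [Sym2.eq_swap]
    exact (some_none y).symm
  · exact some_none x
  · exact subdivide_deleteEdges_reachable_some_some hG x y

end Subdivision

section Orientations

variable {G : SimpleGraph V} {u v : V}

def subdivideArcs (R : V → V → Prop) (u v : V) : Option V → Option V → Prop
  | some x, some y => R x y ∧ s(x, y) ≠ s(u, v)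
  | some x, none => x = u
  | none, some y => y = v
  | none, none => False

theorem isOrientation_subdivideArcs {R : V → V → Prop} (hR : IsOrientation G R) (huv : R u v) :
    IsOrientation (subdivide G u v) (subdivideArcs R u v) := by
  obtain ⟨hedge, hdir, hanti⟩ := hR
  have hne : u ≠ v := (hedge u v huv).ne
  refine ⟨?_, ?_, ?_⟩
  · rintro (_ | x) (_ | y) h <;> simp only [subdivideArcs] at h
    · simp [h]
    · simp [h]
    · exact subdivide_adj_some_some.mpr ⟨hedge x y h.1, h.2⟩
  · rintro (_ | x) (_ | y) h
    · simp at h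
    · rcases subdivide_adj_none_left.mp h with h | h <;> cases h <;> simp [subdivideArcs]
    · rcases subdivide_adj_none_right.mp h with h | h <;> cases h <;> simp [subdivideArcs]
    · obtain ⟨hxy, hxy_uv⟩ := subdivide_adj_some_some.mp h
      exact (hdir x y hxy).imp (⟨·, hxy_uv⟩) (⟨·, by rwa [Sym2.eq_swap]⟩)
  · rintro (_ | x) (_ | y) h h' <;> simp only [subdivideArcs] at h h'
    · exact hne (h'.symm.trans h)
    · exact hne (h.symm.trans h')
    · exact hanti x y h.1 h'.1

theorem reflTransGen_subdivideArcs {R : V → V → Prop} (hvu : ¬ R v u) {x y : V}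
    (h : ReflTransGen R x y) : ReflTransGen (subdivideArcs R u v) (some x) (some y) :=
  h.lift' some fun c d hcd => by
    by_cases h : s(c, d) = s(u, v)
    · rcases Sym2.eq_iff.mp h with ⟨rfl, rfl⟩ | ⟨rfl, rfl⟩
      · exact .head (b := none) rfl (.single rfl)
      · exact absurd hcd hvu
    · exact .single ⟨hcd, h⟩

theorem isStrong_subdivideArcs {R : V → V → Prop} (hR : IsStrong R) (hvu : ¬ R v u) :
    IsStrong (subdivideArcs R u v) := by
  rw [isStrong_iff_forall_reflTransGen] at hR ⊢
  rintro (_ | x) (_ | y)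
  · exact .refl
  · exact .head (b := some v) rfl (reflTransGen_subdivideArcs hvu (hR v y))
  · exact (reflTransGen_subdivideArcs hvu (hR x u)).tail rfl
  · exact reflTransGen_subdivideArcs hvu (hR x y)

theorem exists_strong_orientation_subdivide {R : V → V → Prop} (huv : G.Adj u v)
    (hR : IsOrientation G R) (hs : IsStrong R) :
    ∃ R' : Option V → Option V → Prop, IsOrientation (subdivide G u v) R' ∧ IsStrong R' := by
  rcases hR.2.1 u v huv with h | h
  · exact ⟨_, isOrientation_subdivideArcs hR h, isStrong_subdivideArcs hs (hR.2.2 u v h)⟩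
  · rw [subdivide_comm]
    exact ⟨_, isOrientation_subdivideArcs hR h, isStrong_subdivideArcs hs (hR.2.2 v u h)⟩

def contractArcs (R' : Option V → Option V → Prop) (u v : V) (x y : V) : Prop :=
  R' (some x) (some y) ∨ (x = u ∧ y = v)

def contractArc (u v : V) (q : Option V × Option V) : V × V := (q.1.getD u, q.2.getD v)

theorem isOrientation_contractArcs {R' : Option V → Option V → Prop} (huv : G.Adj u v)
    (hR' : IsOrientation (subdivide G u v) R') : IsOrientation G (contractArcs R' u v) := by
  obtain ⟨hedge, hdir, hanti⟩ := hR'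
  refine ⟨?_, fun x y hxy => ?_, ?_⟩
  · rintro x y (h | ⟨rfl, rfl⟩)
    · exact (subdivide_adj_some_some.mp (hedge _ _ h)).1
    · exact huv
  · by_cases h : s(x, y) = s(u, v)
    · rcases Sym2.eq_iff.mp h with ⟨rfl, rfl⟩ | ⟨rfl, rfl⟩
      · exact .inl (.inr ⟨rfl, rfl⟩)
      · exact .inr (.inr ⟨rfl, rfl⟩)
    · exact (hdir _ _ (subdivide_adj_some_some.mpr ⟨hxy, h⟩)).imp .inl .inl
  · rintro x y (h | ⟨rfl, rfl⟩) (h' | ⟨h₁, h₂⟩)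
    · exact hanti _ _ h h'
    · subst h₁ h₂
      exact (subdivide_adj_some_some.mp (hedge _ _ h)).2 Sym2.eq_swap
    · exact (subdivide_adj_some_some.mp (hedge _ _ h')).2 Sym2.eq_swap
    · exact huv.ne h₂

theorem reflTransGen_image_contractArc {A' : Set (Option V × Option V)}
    (hin : ∀ a, (a, none) ∈ A' → a = some u) (hout : ∀ b, (none, b) ∈ A' → b = some v)
    {c : V} (hc : c = u ∨ c = v) {a b : Option V} (h : ReflTransGen (arcRel A') a b) :
    ReflTransGen (arcRel (contractArc u v '' A')) (a.getD c) (b.getD c) :=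
  h.lift' (·.getD c) fun a b hab => by
    have hmem : arcRel (contractArc u v '' A') (contractArc u v (a, b)).1
        (contractArc u v (a, b)).2 := ⟨_, hab, rfl⟩
    obtain _ | s := a <;> obtain _ | t := b
    · cases hin _ hab
    · cases hout _ hab
      rcases hc with rfl | rfl
      · exact .single hmem
      · exact .refl
    · cases hin _ hab
      rcases hc with rfl | rfl
      · exact .refl
      · exact .single hmem
    · exact .single hmem

section ArcsAtNone

variable {R' : Option V → Option V → Prop}
  (hin : ∀ a, R' a none → a = some u) (hout : ∀ b, R' none b → b = some v)
include hin hout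

theorem contractArcs_contractArc {q : Option V × Option V} (hq : R' q.1 q.2) :
    contractArcs R' u v (contractArc u v q).1 (contractArc u v q).2 := by
  obtain ⟨_ | s, _ | t⟩ := q
  · cases hin _ hq
  · cases hout _ hq
    exact .inr ⟨rfl, rfl⟩
  · cases hin _ hq
    exact .inr ⟨rfl, rfl⟩
  · exact .inl hq

theorem isStrong_contractArcs (hs : IsStrong R') : IsStrong (contractArcs R' u v) := by
  rw [isStrong_iff_forall_reflTransGen] at hs ⊢
  intro x y
  refine ReflTransGen.mono ?_ _ _ <| reflTransGen_image_contractArc (A' := {q | R' q.1 q.2})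
    hin hout (.inl rfl) (hs (some x) (some y))
  rintro _ _ ⟨q, hq, he⟩
  simpa only [he] using contractArcs_contractArc hin hout hq

theorem IsStrongSubOn.image_contractArc {x y : V} {A' : Set (Option V × Option V)}
    (h : IsStrongSubOn R' (some x) (some y) A') :
    IsStrongSubOn (contractArcs R' u v) x y (contractArc u v '' A') := by
  obtain ⟨harc, hxy, hyx, hA⟩ := isStrongSubOn_iff.mp h
  have proj {c : V} (hc : c = u ∨ c = v) {a b : Option V}
      (hab : ReflTransGen (arcRel A') a b) :=
    reflTransGen_image_contractArc (fun a ha => hin a (harc _ ha))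
      (fun b hb => hout b (harc _ hb)) hc hab
  refine isStrongSubOn_iff.mpr ⟨?_, proj (.inl rfl) hxy, proj (.inl rfl) hyx, ?_⟩
  · rintro _ ⟨q, hq, rfl⟩
    exact contractArcs_contractArc hin hout (harc q hq)
  · rintro _ ⟨q, hq, rfl⟩
    exact ⟨proj (.inl rfl) (hA q hq).1, proj (.inr rfl) (hA q hq).2⟩

theorem sdist_contractArcs_le [Finite V] (hs : IsStrong R') (x y : V) :
    sdist (contractArcs R' u v) x y ≤ sdist R' (some x) (some y) := by
  obtain ⟨A', hcard, hA'⟩ := exists_isStrongSubOn_ncard_eq_sdist hs (some x) (some y)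
  calc sdist (contractArcs R' u v) x y ≤ (contractArc u v '' A').ncard :=
        sdist_le_ncard (Set.toFinite _) (hA'.image_contractArc hin hout)
    _ ≤ A'.ncard := Set.ncard_image_le (Set.toFinite _)
    _ = sdist R' (some x) (some y) := hcard

theorem sdiamOr_contractArcs_le [Fintype V] (hs : IsStrong R') :
    sdiamOr (contractArcs R' u v) ≤ sdiamOr R' :=
  Finset.sup_le fun p _ => (sdist_contractArcs_le hin hout hs p.1 p.2).trans <|
    Finset.le_sup (f := fun q : Option V × Option V => sdist R' q.1 q.2)
      (Finset.mem_univ (some p.1, some p.2))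

end ArcsAtNone

theorem subdivide_none_arcs {R' : Option V → Option V → Prop}
    (hR' : IsOrientation (subdivide G u v) R') (hs : IsStrong R') (hu : R' (some u) none) :
    (∀ a, R' a none → a = some u) ∧ (∀ b, R' none b → b = some v) := by
  obtain ⟨hedge, -, hanti⟩ := hR'
  have hout (b) (hb : R' none b) : b = some v :=
    (subdivide_adj_none_left.mp (hedge _ _ hb)).resolve_left fun h => hanti _ _ hu (h ▸ hb)
  have hv : R' none (some v) := by
    obtain h | ⟨b, hb, -⟩ := (isStrong_iff_forall_reflTransGen.mp hs none (some u)).cases_head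
    · cases h
    · exact hout b hb ▸ hb
  refine ⟨fun a ha => ?_, hout⟩
  rcases subdivide_adj_none_right.mp (hedge _ _ ha) with rfl | rfl
  · rfl
  · exact absurd hv (hanti _ _ ha)

theorem exists_orientation_sdiamOr_le [Fintype V] {R' : Option V → Option V → Prop}
    (huv : G.Adj u v) (hR' : IsOrientation (subdivide G u v) R') (hs : IsStrong R') :
    ∃ R, IsOrientation G R ∧ IsStrong R ∧ sdiamOr R ≤ sdiamOr R' := by
  have contract {u v : V} (huv : G.Adj u v) (hR' : IsOrientation (subdivide G u v) R')
      (hu : R' (some u) none) : ∃ R, IsOrientation G R ∧ IsStrong R ∧ sdiamOr R ≤ sdiamOr R' :=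
    have ⟨hin, hout⟩ := subdivide_none_arcs hR' hs hu
    ⟨_, isOrientation_contractArcs huv hR', isStrong_contractArcs hin hout hs,
      sdiamOr_contractArcs_le hin hout hs⟩
  obtain h | ⟨a, -, ha⟩ := (isStrong_iff_forall_reflTransGen.mp hs (some u) none).cases_tail
  · cases h
  rcases subdivide_adj_none_right.mp (hR'.1 _ _ ha) with rfl | rfl
  · exact contract huv hR' ha
  · exact contract huv.symm (subdivide_comm ▸ hR') ha

theorem orientedSDiam_le_orientedSDiam_subdivide [Fintype V] (huv : G.Adj u v) :
    orientedSDiam G ≤ orientedSDiam (subdivide G u v) := by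
  refine Nat.sInf_le_sInf_of_forall_exists_le ?_ ?_
  · rintro _ ⟨R', hR', hs, rfl⟩
    obtain ⟨R, hR, hsR, hle⟩ := exists_orientation_sdiamOr_le huv hR' hs
    exact ⟨_, ⟨R, hR, hsR, rfl⟩, hle⟩
  · rintro ⟨_, R, hR, hs, -⟩
    obtain ⟨R', hR', hs'⟩ := exists_strong_orientation_subdivide huv hR hs
    exact ⟨_, R', hR', hs', rfl⟩

end Orientations

theorem subdivide_oriented_sdiam_ge_general {V : Type*} [Fintype V]
    (G : SimpleGraph V) (u v : V) (huv : G.Adj u v)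
    (hbridgeless : IsBridgeless G) :
    (subdivide G u v).Connected ∧ IsBridgeless (subdivide G u v) ∧
      orientedSDiam G ≤ orientedSDiam (subdivide G u v) := by
  have hsub := isBridgeless_subdivide hbridgeless huv
  exact ⟨⟨hsub.preconnected⟩, hsub, orientedSDiam_le_orientedSDiam_subdivide huv⟩

/-- Subdividing an edge of a connected bridgeless graph keeps it connected
and bridgeless and does not decrease the oriented strong diameter. -/
theorem subdivide_oriented_sdiam_ge {V : Type*} [Fintype V]
    (G : SimpleGraph V) (u v : V) (huv : G.Adj u v)
    (hconn : G.Connected) (hbridgeless : IsBridgeless G) :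
    (subdivide G u v).Connected ∧ IsBridgeless (subdivide G u v) ∧
      orientedSDiam G ≤ orientedSDiam (subdivide G u v) :=
  subdivide_oriented_sdiam_ge_general G u v huv hbridgeless
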